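/- For every n ∈ ℕ₊ the L¹ norm of the Walsh–Dirichlet kernel satisfies V(n)/8 ≤ ‖D_n‖₁ ≤ V(n), where V(n) := n_0 + Σ_{k≥1} |n_k − n_{k−1}| is the variation of the binary digits of n. Consequently ‖S_n f‖₁ ≤ c V(n) ‖f‖₁ for all f ∈ L¹(G) with an absolute constant c. -/

import Mathlib

open MeasureTheory Finset ENNReal NNReal

noncomputable section

/-- The dyadic (Walsh) group `G = (ℤ/2)^ℕ`. -/
abbrev G : Type := ℕ → ZMod 2

/-- The dyadic interval `I_n(x)`: points agreeing with `x` in the first `n` coordinates. -/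
def cyl (n : ℕ) (x : G) : Set G := {y : G | ∀ j < n, y j = x j}

/-- The dyadic interval `I_n = I_n(0)`. -/
def Icyl (n : ℕ) : Set G := cyl n 0

/-- The `k`-th Rademacher function `r_k(x) = (-1)^{x_k}`. -/
def rad (k : ℕ) (x : G) : ℝ := (-1 : ℝ) ^ (x k).val

/-- The `n`-th Walsh function `w_n = ∏_k r_k^{n_k}`, `n_k` the binary digits of `n`. -/
def walsh (n : ℕ) (x : G) : ℝ :=
  ∏ k ∈ Finset.range n, if n.testBit k then rad k x else 1

/-- The `n`-th Walsh–Dirichlet kernel `D_n = ∑_{k<n} w_k`. -/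
def dirichlet (n : ℕ) (x : G) : ℝ := ∑ k ∈ Finset.range n, walsh k x

/-- `k`-th Walsh–Fourier coefficient of `f` with respect to the measure `μ`. -/
def coef (μ : Measure G) (f : G → ℝ) (k : ℕ) : ℝ := ∫ x, f x * walsh k x ∂μ

/-- `n`-th partial sum of the Walsh–Fourier series of `f`. -/
def psum (μ : Measure G) (n : ℕ) (f : G → ℝ) (x : G) : ℝ :=
  ∑ k ∈ Finset.range n, coef μ f k * walsh k x

/-- `|n|`: position of the highest nonzero binary digit of `n`. -/
def hi (n : ℕ) : ℕ := Nat.log 2 n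

/-- `[n]`: position of the lowest nonzero binary digit of `n`. -/
def lo (n : ℕ) : ℕ := padicValNat 2 n

/-- `ρ(n) = |n| - [n]`. -/
def rho (n : ℕ) : ℕ := hi n - lo n

/-- `e_m ∈ G`: the element with `m`-th coordinate `1` and all others `0`. -/
def eG (m : ℕ) : G := fun j => if j = m then 1 else 0

/-- `a` is a `p`-atom supported on the dyadic interval `I_M`. -/
def IsPAtom (μ : Measure G) (p : ℝ) (M : ℕ) (a : G → ℝ) : Prop :=
  Measurable a ∧ (∀ x, x ∉ Icyl M → a x = 0) ∧ (∫ x, a x ∂μ) = 0 ∧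
    ∀ x, |a x| ≤ (2 : ℝ) ^ ((M : ℝ) / p)

/-- The hypothesis that `μ` is the Haar (fair-coin product) probability measure on `G`,
characterized by its values on dyadic intervals. -/
def IsHaarG (μ : Measure G) : Prop := ∀ (n : ℕ) (x : G), μ (cyl n x) = 2⁻¹ ^ n

/-- The `p`-th power of the `H_p` quasi-norm: `∫ (sup_n |S_{2^n} f|)^p dμ`. -/
def HpP (μ : Measure G) (p : ℝ) (f : G → ℝ) : ℝ≥0∞ :=
  ∫⁻ x, (⨆ n : ℕ, ENNReal.ofReal |psum μ (2 ^ n) f x|) ^ p ∂μ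

/-- The weighted maximal operator `sup_n |S_n f| / 2^{ρ(n)(1/p-1)}` (with values in `ℝ≥0∞`). -/
def maxW (μ : Measure G) (p : ℝ) (f : G → ℝ) (x : G) : ℝ≥0∞ :=
  ⨆ n : ℕ, ENNReal.ofReal (|psum μ n f x| / 2 ^ ((rho n : ℝ) * (1 / p - 1)))

/-- The `p`-th power of the weak-`L_p` quasi-norm of a `ℝ≥0∞`-valued function. -/
def weakLpP (μ : Measure G) (p : ℝ) (g : G → ℝ≥0∞) : ℝ≥0∞ :=
  ⨆ t : ℝ≥0, (t : ℝ≥0∞) ^ p * μ {x | (t : ℝ≥0∞) < g x}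

/-- The binary digit of `n` at position `k`, as a real number. -/
def bitR (n k : ℕ) : ℝ := if n.testBit k then 1 else 0

/-- The variation `V(n) = n_0 + ∑_{k≥1} |n_k - n_{k-1}|` of the binary digits of `n`. -/
def Vn (n : ℕ) : ℝ := bitR n 0 + ∑' k : ℕ, |bitR n (k + 1) - bitR n k|

/-!
On the dyadic interval where the first nonzero coordinate of `x` is `s`, the recursion
`D_n(x) = (1 + r_0(x)) D_{⌊n/2⌋}(Tx) + n_0 w_{⌊n/2⌋}(Tx)` (`T` the shift of coordinates) gives
`D_n(x) = w_n(x) ((n mod 2^s) - n_s 2^s)`, while `D_n = n` on `I_N` once `n ≤ 2^N`. As `|w_n| = 1`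
and `I_s \ I_{s+1}` has measure `2^{-s-1}`, every translate of `|D_n|` has integral
`∑_{s<N} 2^{-s-1} |(n mod 2^s) - n_s 2^s| + 2^{-N} n`.
Passing from `m` to `2m + b`, this closed form grows by `b (1 - 0.m_0 m_1 m_2 …)` and `V` grows by
`2b (1 - m_0)`, so both bounds follow by induction on the binary length of `n`.
Finally `S_n f(x) = ∫ f(t) D_n(x + t) dt`, and Fubini with the translation invariance of
`‖D_n(· + t)‖₁` gives `‖S_n f‖₁ ≤ ‖D_n‖₁ ‖f‖₁ ≤ V(n) ‖f‖₁`, so `c = 1` works.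
-/

def shiftG (x : G) : G := fun j => x (j + 1)

lemma bitR_succ (n k : ℕ) : bitR n (k + 1) = bitR (n / 2) k := by
  rw [bitR, bitR, Nat.testBit_add_one]

lemma bitR_zero (n : ℕ) : bitR n 0 = (n % 2 : ℕ) := by
  rcases Nat.mod_two_eq_zero_or_one n with h | h <;> simp [bitR, Nat.testBit_zero, h]

lemma bitR_eq_zero_or_one (n k : ℕ) : bitR n k = 0 ∨ bitR n k = 1 := by
  unfold bitR; split <;> simp

lemma bitR_nonneg (n k : ℕ) : 0 ≤ bitR n k := by
  rcases bitR_eq_zero_or_one n k with h | h <;> simp [h]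

lemma bitR_le_one (n k : ℕ) : bitR n k ≤ 1 := by
  rcases bitR_eq_zero_or_one n k with h | h <;> simp [h]

lemma bitR_of_lt_two_pow {n k : ℕ} (h : n < 2 ^ k) : bitR n k = 0 := by
  simp [bitR, Nat.testBit_eq_false_of_lt h]

lemma rad_add (k : ℕ) (x t : G) : rad k (x + t) = rad k x * rad k t := by
  rw [rad, rad, rad, Pi.add_apply, ZMod.val_add, ← neg_one_pow_eq_pow_mod_two, pow_add]

lemma walsh_add (n : ℕ) (x t : G) : walsh n (x + t) = walsh n x * walsh n t := by
  rw [walsh, walsh, walsh, ← prod_mul_distrib]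
  refine prod_congr rfl fun k _ => ?_
  split
  · exact rad_add k x t
  · rw [mul_one]

lemma abs_walsh (n : ℕ) (x : G) : |walsh n x| = 1 := by
  rw [walsh, abs_prod]
  refine prod_eq_one fun k _ => ?_
  split <;> simp [rad]

lemma abs_dirichlet_le (n : ℕ) (x : G) : |dirichlet n x| ≤ n := by
  refine (abs_sum_le_sum_abs _ _).trans ?_
  simp [abs_walsh]

lemma measurable_walsh (n : ℕ) : Measurable (walsh n) :=
  Finset.measurable_prod _ fun k _ => by unfold rad; split <;> fun_prop

lemma measurable_dirichlet (n : ℕ) : Measurable (dirichlet n) :=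
  Finset.measurable_sum _ fun k _ => measurable_walsh k

lemma walsh_eq_prod_range {n K : ℕ} (h : n ≤ K) (x : G) :
    walsh n x = ∏ k ∈ range K, if n.testBit k then rad k x else 1 := by
  refine prod_subset (range_subset_range.2 h) fun k _ hk => ?_
  have hnk : n < 2 ^ k := Nat.lt_two_pow_self.trans_le <|
    Nat.pow_le_pow_right two_pos (by simpa using hk)
  simp [Nat.testBit_eq_false_of_lt hnk]

lemma walsh_eq_mul_shiftG (n : ℕ) (x : G) :
    walsh n x = (if n.testBit 0 then rad 0 x else 1) * walsh (n / 2) (shiftG x) := by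
  rw [walsh_eq_prod_range (Nat.le_succ n), prod_range_succ', mul_comm,
    walsh_eq_prod_range (Nat.div_le_self n 2)]
  simp only [Nat.testBit_add_one]
  rfl

lemma dirichlet_eq_mul_shiftG (n : ℕ) (x : G) :
    dirichlet n x = (1 + rad 0 x) * dirichlet (n / 2) (shiftG x)
      + bitR n 0 * walsh (n / 2) (shiftG x) := by
  induction n with
  | zero => simp [dirichlet, bitR]
  | succ n ih =>
    have hif : (if n.testBit 0 then rad 0 x else 1) = 1 + bitR n 0 * (rad 0 x - 1) := by
      unfold bitR; split <;> ring
    rw [dirichlet, sum_range_succ, ← dirichlet, ih, walsh_eq_mul_shiftG n, hif, bitR_zero,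
      bitR_zero]
    rcases Nat.even_or_odd' n with ⟨m, rfl | rfl⟩
    · rw [show (2 * m + 1) / 2 = m by omega, show 2 * m / 2 = m by omega,
        show 2 * m % 2 = 0 by omega, show (2 * m + 1) % 2 = 1 by omega]
      push_cast; ring
    · rw [show (2 * m + 1 + 1) / 2 = m + 1 by omega, show (2 * m + 1) / 2 = m by omega,
        show (2 * m + 1) % 2 = 1 by omega, show (2 * m + 1 + 1) % 2 = 0 by omega,
        dirichlet, dirichlet, sum_range_succ]
      push_cast; ring

lemma mem_cyl_succ_iff {m : ℕ} {x y : G} :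
    x ∈ cyl (m + 1) y ↔ x 0 = y 0 ∧ shiftG x ∈ cyl m (shiftG y) := by
  simp only [cyl, Set.mem_ofPred_eq, shiftG]
  exact ⟨fun h => ⟨h 0 m.succ_pos, fun j hj => h (j + 1) (by omega)⟩,
    fun h j hj => by cases j with
      | zero => exact h.1
      | succ j => exact h.2 j (by omega)⟩

lemma shiftG_eG (s : ℕ) : shiftG (eG (s + 1)) = eG s := by
  ext j; simp [shiftG, eG]

lemma cyl_zero_eq_union (N : ℕ) : cyl N 0 = cyl (N + 1) (eG N) ∪ cyl (N + 1) 0 := by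
  ext x
  simp only [cyl, Set.mem_union, Set.mem_ofPred_eq, Pi.zero_apply, eG]
  refine ⟨fun h => ?_, ?_⟩
  · have hxN : x N = 0 ∨ x N = 1 := (by decide : ∀ z : ZMod 2, z = 0 ∨ z = 1) (x N)
    rcases hxN with hN | hN
    · refine Or.inr fun j hj => ?_
      rcases Nat.lt_succ_iff_lt_or_eq.1 hj with hj | rfl
      exacts [h j hj, hN]
    · refine Or.inl fun j hj => ?_
      rcases Nat.lt_succ_iff_lt_or_eq.1 hj with hj | rfl
      exacts [by simp [hj.ne, h j hj], by simp [hN]]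
  · rintro (h | h) j hj
    · simpa [hj.ne] using h j (by omega)
    · exact h j (by omega)

lemma disjoint_cyl_eG_cyl_zero (N : ℕ) : Disjoint (cyl (N + 1) (eG N)) (cyl (N + 1) 0) :=
  Set.disjoint_left.2 fun x h1 h0 => by
    simpa [eG, h0 N N.lt_succ_self] using h1 N N.lt_succ_self

lemma measurableSet_cyl (m : ℕ) (y : G) : MeasurableSet (cyl m y) := by
  simp only [cyl, Set.ofPred_forall]
  exact .iInter fun j => .iInter fun _ =>
    measurableSet_eq_fun (measurable_pi_apply j) measurable_const

lemma add_mem_cyl_iff {m : ℕ} {x y t : G} : x + t ∈ cyl m y ↔ x ∈ cyl m (y - t) := by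
  simp [cyl, eq_sub_iff_add_eq]

lemma indicator_cyl_add {m : ℕ} {x y t : G} {a : ℝ} :
    (cyl m y).indicator (fun _ => a) (x + t) = (cyl m (y - t)).indicator (fun _ => a) x := by
  by_cases h : x + t ∈ cyl m y
  · rw [Set.indicator_of_mem h, Set.indicator_of_mem (add_mem_cyl_iff.1 h)]
  · rw [Set.indicator_of_notMem h, Set.indicator_of_notMem (mt add_mem_cyl_iff.2 h)]

def dirichletLevel (n s : ℕ) : ℝ := (n % 2 ^ s : ℕ) - bitR n s * 2 ^ s

lemma dirichletLevel_zero (n : ℕ) : dirichletLevel n 0 = -bitR n 0 := by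
  simp [dirichletLevel, Nat.mod_one]

lemma dirichletLevel_succ (n s : ℕ) :
    dirichletLevel n (s + 1) = 2 * dirichletLevel (n / 2) s + bitR n 0 := by
  have hmod : n % 2 ^ (s + 1) = n % 2 + 2 * (n / 2 % 2 ^ s) := by
    rw [pow_succ', Nat.mod_mul]
  rw [dirichletLevel, dirichletLevel, hmod, bitR_succ, bitR_zero]
  push_cast
  ring

lemma dirichlet_eq_walsh_mul_dirichletLevel {s : ℕ} {x : G} (hx : x ∈ cyl (s + 1) (eG s))
    (n : ℕ) : dirichlet n x = walsh n x * dirichletLevel n s := by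
  induction s generalizing n x with
  | zero =>
    have hrad : rad 0 x = -1 := by
      simp [rad, (mem_cyl_succ_iff.1 hx).1, eG, ZMod.val_one]
    rw [dirichlet_eq_mul_shiftG, walsh_eq_mul_shiftG n x, dirichletLevel_zero, hrad]
    by_cases h : n.testBit 0 <;> simp [h, bitR]
  | succ s ih =>
    obtain ⟨hx0, hshift⟩ := mem_cyl_succ_iff.1 hx
    have hrad : rad 0 x = 1 := by simp [rad, hx0, eG]
    rw [shiftG_eG] at hshift
    rw [dirichlet_eq_mul_shiftG, walsh_eq_mul_shiftG n x, dirichletLevel_succ, hrad,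
      ih hshift, ite_self]
    ring

lemma dirichlet_of_mem_cyl_zero {n N : ℕ} (hn : n ≤ 2 ^ N) {x : G} (hx : x ∈ cyl N 0) :
    dirichlet n x = n := by
  have hwalsh : ∀ k < n, walsh k x = 1 := fun k hk => prod_eq_one fun j _ => by
    by_cases hj : j < N
    · simp [rad, hx j hj]
    · simp [Nat.testBit_eq_false_of_lt ((hk.trans_le hn).trans_le
        (Nat.pow_le_pow_right two_pos (not_lt.1 hj)))]
  simp [dirichlet, sum_congr rfl fun k hk => hwalsh k (mem_range.1 hk)]

lemma abs_dirichlet_eq_sum_indicator (n N : ℕ) (x : G) :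
    |dirichlet n x|
      = ∑ s ∈ range N, (cyl (s + 1) (eG s)).indicator (fun _ => |dirichletLevel n s|) x
        + (cyl N 0).indicator (fun y => |dirichlet n y|) x := by
  induction N with
  | zero => simp [cyl]
  | succ N ih =>
    have hlevel : Set.EqOn (fun y => |dirichlet n y|) (fun _ => |dirichletLevel n N|)
        (cyl (N + 1) (eG N)) := fun y hy => by
      simp [dirichlet_eq_walsh_mul_dirichletLevel hy, abs_mul, abs_walsh]
    rw [ih, sum_range_succ, cyl_zero_eq_union, Set.indicator_union_of_disjoint
      (disjoint_cyl_eG_cyl_zero N), Set.indicator_congr hlevel, add_assoc]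

lemma abs_dirichlet_eq_sum_indicator_const {n N : ℕ} (hn : n ≤ 2 ^ N) (x : G) :
    |dirichlet n x|
      = ∑ s ∈ range N, (cyl (s + 1) (eG s)).indicator (fun _ => |dirichletLevel n s|) x
        + (cyl N 0).indicator (fun _ => (n : ℝ)) x := by
  rw [abs_dirichlet_eq_sum_indicator n N, Set.indicator_congr fun y hy => by
    rw [dirichlet_of_mem_cyl_zero hn hy, Nat.abs_cast]]

lemma natCast_eq_two_mul_div_two_add_bitR (n : ℕ) : (n : ℝ) = 2 * (n / 2 : ℕ) + bitR n 0 := by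
  rw [bitR_zero]; exact_mod_cast (Nat.div_add_mod n 2).symm

lemma Vn_zero : Vn 0 = 0 := by simp [Vn, bitR]

lemma summable_abs_bitR_succ_sub_bitR (n : ℕ) :
    Summable fun k => |bitR n (k + 1) - bitR n k| := by
  refine summable_of_ne_finset_zero (s := range n) fun k hk => ?_
  have hnk : n < 2 ^ k := Nat.lt_two_pow_self.trans_le <|
    Nat.pow_le_pow_right two_pos (by simpa using hk)
  have hnk' : n < 2 ^ (k + 1) := hnk.trans_le (Nat.pow_le_pow_right two_pos k.le_succ)
  rw [bitR_of_lt_two_pow hnk, bitR_of_lt_two_pow hnk', sub_zero, abs_zero]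

lemma Vn_eq_Vn_div_two_add (n : ℕ) :
    Vn n = Vn (n / 2) + 2 * bitR n 0 * (1 - bitR (n / 2) 0) := by
  rw [Vn, Vn, (summable_abs_bitR_succ_sub_bitR n).tsum_eq_zero_add, bitR_succ n 0]
  simp only [bitR_succ n (_ + 1), bitR_succ n _]
  have hbits : bitR n 0 + |bitR (n / 2) 0 - bitR n 0|
      = bitR (n / 2) 0 + 2 * bitR n 0 * (1 - bitR (n / 2) 0) := by
    rcases bitR_eq_zero_or_one n 0 with hb | hb <;>
      rcases bitR_eq_zero_or_one (n / 2) 0 with hb' | hb' <;> norm_num [hb, hb']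
  linarith

-- The binary fraction `0.n_0 n_1 … n_{N-1}`.
def dyadicFrac (N n : ℕ) : ℝ := ∑ s ∈ range N, (2⁻¹ : ℝ) ^ (s + 1) * bitR n s

lemma dyadicFrac_succ (N n : ℕ) :
    dyadicFrac (N + 1) n = (bitR n 0 + dyadicFrac N (n / 2)) / 2 := by
  rw [dyadicFrac, sum_range_succ', dyadicFrac, add_div, sum_div, add_comm]
  simp only [bitR_succ]
  congr 1
  · ring
  · exact sum_congr rfl fun s _ => by ring

lemma dyadicFrac_nonneg (N n : ℕ) : 0 ≤ dyadicFrac N n :=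
  sum_nonneg fun s _ => mul_nonneg (by positivity) (bitR_nonneg n s)

lemma dyadicFrac_le (N n : ℕ) : dyadicFrac N n ≤ (1 + bitR n 0) / 2 := by
  induction N generalizing n with
  | zero => rw [dyadicFrac, sum_range_zero]; linarith [bitR_nonneg n 0]
  | succ N ih =>
    rw [dyadicFrac_succ]
    linarith [ih (n / 2), bitR_le_one (n / 2) 0]

lemma sum_range_inv_two_pow_succ (N : ℕ) :
    ∑ s ∈ range N, (2⁻¹ : ℝ) ^ (s + 1) = 1 - 2⁻¹ ^ N := by
  induction N with
  | zero => simp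
  | succ N ih => rw [sum_range_succ, ih]; ring

lemma abs_dirichletLevel_zero (n : ℕ) : |dirichletLevel n 0| = bitR n 0 := by
  rw [dirichletLevel_zero, abs_neg, abs_of_nonneg (bitR_nonneg n 0)]

lemma abs_dirichletLevel_succ (n s : ℕ) :
    |dirichletLevel n (s + 1)|
      = 2 * |dirichletLevel (n / 2) s| + bitR n 0 * (1 - 2 * bitR (n / 2) s) := by
  have hmod : ((n / 2 % 2 ^ s : ℕ) : ℝ) + 1 ≤ 2 ^ s := by
    exact_mod_cast Nat.mod_lt _ (Nat.pow_pos two_pos)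
  have hmod' : (0 : ℝ) ≤ (n / 2 % 2 ^ s : ℕ) := Nat.cast_nonneg _
  rw [dirichletLevel_succ, dirichletLevel]
  have hb0 := bitR_nonneg n 0
  have hb1 := bitR_le_one n 0
  rcases bitR_eq_zero_or_one (n / 2) s with h | h <;> rw [h]
  · rw [abs_of_nonneg (by linarith), abs_of_nonneg (by linarith)]; ring
  · rw [abs_of_neg (by linarith), abs_of_neg (by linarith)]; ring

-- The closed form of `‖D_n‖₁`, valid for `n ≤ 2 ^ N`.
def dirichletL1Sum (N n : ℕ) : ℝ :=
  ∑ s ∈ range N, (2⁻¹ : ℝ) ^ (s + 1) * |dirichletLevel n s| + (2⁻¹ : ℝ) ^ N * n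

lemma dirichletL1Sum_succ (N n : ℕ) :
    dirichletL1Sum (N + 1) n
      = dirichletL1Sum N (n / 2) + bitR n 0 * (1 - dyadicFrac N (n / 2)) := by
  have hterm (s : ℕ) : (2⁻¹ : ℝ) ^ (s + 1 + 1) * |dirichletLevel n (s + 1)|
      = 2⁻¹ ^ (s + 1) * |dirichletLevel (n / 2) s| + bitR n 0 * 2⁻¹ * 2⁻¹ ^ (s + 1)
        - bitR n 0 * (2⁻¹ ^ (s + 1) * bitR (n / 2) s) := by
    rw [abs_dirichletLevel_succ]; ring
  rw [dirichletL1Sum, sum_range_succ', sum_congr rfl fun s _ => hterm s, sum_sub_distrib,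
    sum_add_distrib, ← mul_sum, ← mul_sum, sum_range_inv_two_pow_succ, abs_dirichletLevel_zero,
    natCast_eq_two_mul_div_two_add_bitR n, dirichletL1Sum, dyadicFrac]
  ring

theorem Vn_div_eight_le_dirichletL1Sum {N n : ℕ} (hn : n < 2 ^ N) :
    Vn n / 8 ≤ dirichletL1Sum N n := by
  induction N generalizing n with
  | zero => simp [show n = 0 by simpa using hn, Vn_zero, dirichletL1Sum]
  | succ N ih =>
    have hm : n / 2 < 2 ^ N := by rw [pow_succ] at hn; omega
    rw [dirichletL1Sum_succ, Vn_eq_Vn_div_two_add]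
    have hih := ih hm
    have hfrac := dyadicFrac_le N (n / 2)
    have hbit := bitR_le_one (n / 2) 0
    rcases bitR_eq_zero_or_one n 0 with hb | hb <;> rw [hb] <;> linarith

-- The correction term is what makes the induction close at odd `n`.
lemma dirichletL1Sum_add_le_Vn {N n : ℕ} (hn : n < 2 ^ N) :
    dirichletL1Sum N n + 2 * bitR n 0 * (1 - dyadicFrac N n) ≤ Vn n := by
  induction N generalizing n with
  | zero => simp [show n = 0 by simpa using hn, Vn_zero, dirichletL1Sum, bitR]
  | succ N ih =>
    have hm : n / 2 < 2 ^ N := by rw [pow_succ] at hn; omega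
    rw [dirichletL1Sum_succ, Vn_eq_Vn_div_two_add, dyadicFrac_succ]
    have hih := ih hm
    have hfrac := dyadicFrac_le N (n / 2)
    have hfrac0 := dyadicFrac_nonneg N (n / 2)
    rcases bitR_eq_zero_or_one (n / 2) 0 with hb' | hb' <;>
      rcases bitR_eq_zero_or_one n 0 with hb | hb <;>
      simp only [hb, hb'] at hih hfrac ⊢ <;> linarith

theorem dirichletL1Sum_le_Vn {N n : ℕ} (hn : n < 2 ^ N) : dirichletL1Sum N n ≤ Vn n := by
  have hfrac := dyadicFrac_le N n
  have hbit := bitR_le_one n 0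
  have hcorr : 0 ≤ 2 * bitR n 0 * (1 - dyadicFrac N n) :=
    mul_nonneg (by linarith [bitR_nonneg n 0]) (by linarith)
  linarith [dirichletL1Sum_add_le_Vn hn]

section Haar

variable {μ : Measure G}

lemma isProbabilityMeasure_of_isHaarG (hμ : IsHaarG μ) : IsProbabilityMeasure μ :=
  ⟨by simpa [cyl] using hμ 0 0⟩

lemma measureReal_cyl (hμ : IsHaarG μ) (m : ℕ) (y : G) : μ.real (cyl m y) = 2⁻¹ ^ m := by
  simp [measureReal_def, hμ m y]

theorem integral_abs_dirichlet_add_eq_dirichletL1Sum (hμ : IsHaarG μ) {n N : ℕ} (hn : n ≤ 2 ^ N)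
    (t : G) :
    ∫ x, |dirichlet n (x + t)| ∂μ = dirichletL1Sum N n := by
  have := isProbabilityMeasure_of_isHaarG hμ
  have hint (m : ℕ) (y : G) (a : ℝ) : Integrable ((cyl m y).indicator fun _ => a) μ :=
    (integrable_const a).indicator (measurableSet_cyl m y)
  have htranslate (x : G) : |dirichlet n (x + t)|
      = ∑ s ∈ range N, (cyl (s + 1) (eG s - t)).indicator (fun _ => |dirichletLevel n s|) x
        + (cyl N (0 - t)).indicator (fun _ => (n : ℝ)) x := by
    simp only [abs_dirichlet_eq_sum_indicator_const hn, indicator_cyl_add]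
  simp only [htranslate]
  rw [integral_add (integrable_finsetSum _ fun s _ => hint _ _ _) (hint _ _ _),
    integral_finsetSum _ fun s _ => hint _ _ _]
  simp only [integral_indicator_const _ (measurableSet_cyl _ _), measureReal_cyl hμ,
    smul_eq_mul, dirichletL1Sum]

lemma integral_abs_dirichlet_add_right_eq_self (hμ : IsHaarG μ) (n : ℕ) (t : G) :
    ∫ x, |dirichlet n (x + t)| ∂μ = ∫ x, |dirichlet n x| ∂μ := by
  have hn : n ≤ 2 ^ n := Nat.lt_two_pow_self.le
  simpa using (integral_abs_dirichlet_add_eq_dirichletL1Sum hμ hn t).trans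
    (integral_abs_dirichlet_add_eq_dirichletL1Sum hμ hn 0).symm

lemma psum_eq_integral_mul_dirichlet_add (n : ℕ) {f : G → ℝ} (hf : Integrable f μ) (x : G) :
    psum μ n f x = ∫ t, f t * dirichlet n (x + t) ∂μ := by
  have hint (k : ℕ) : Integrable (fun t => f t * walsh k (x + t)) μ :=
    hf.mul_bdd ((measurable_walsh k).comp (measurable_const_add x)).aestronglyMeasurable
      (ae_of_all _ fun t => (abs_walsh k (x + t)).le)
  simp only [dirichlet, mul_sum]
  rw [integral_finsetSum _ fun k _ => hint k, psum]
  refine sum_congr rfl fun k _ => ?_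
  simp only [coef, ← integral_mul_const, walsh_add]
  congr 1 with t
  ring

theorem integral_abs_psum_le (hμ : IsHaarG μ) (n : ℕ) {f : G → ℝ} (hf : Integrable f μ) :
    ∫ x, |psum μ n f x| ∂μ ≤ (∫ x, |dirichlet n x| ∂μ) * ∫ x, |f x| ∂μ := by
  have := isProbabilityMeasure_of_isHaarG hμ
  set F : G × G → ℝ := fun z => f z.2 * dirichlet n (z.1 + z.2)
  have hF : Integrable F (μ.prod μ) :=
    (hf.comp_snd μ).mul_bdd
      ((measurable_dirichlet n).comp measurable_add).aestronglyMeasurable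
      (ae_of_all _ fun z => abs_dirichlet_le n _)
  calc ∫ x, |psum μ n f x| ∂μ ≤ ∫ x, ∫ t, ‖F (x, t)‖ ∂μ ∂μ := by
        refine integral_mono_of_nonneg (ae_of_all _ fun x => abs_nonneg _)
          hF.integral_norm_prod_left (ae_of_all _ fun x => ?_)
        dsimp only
        rw [psum_eq_integral_mul_dirichlet_add n hf x]
        exact norm_integral_le_integral_norm fun t => F (x, t)
    _ = ∫ t, ∫ x, ‖F (x, t)‖ ∂μ ∂μ := integral_integral_swap hF.norm
    _ = ∫ t, |f t| * ∫ x, |dirichlet n x| ∂μ ∂μ := by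
        congr 1 with t
        simp only [F, Real.norm_eq_abs, abs_mul, integral_const_mul,
          integral_abs_dirichlet_add_right_eq_self hμ]
    _ = (∫ x, |dirichlet n x| ∂μ) * ∫ x, |f x| ∂μ := by
        rw [integral_mul_const, mul_comm]

end Haar

/-- `V(n)/8 ≤ ‖D_n‖₁ ≤ V(n)`, and consequently `‖S_n f‖₁ ≤ c V(n) ‖f‖₁` for all
`f ∈ L¹(G)` with an absolute constant `c`. -/
theorem stmt18 (μ : Measure G) (hμ : IsHaarG μ) :
    ∃ c : ℝ, 0 < c ∧ ∀ n : ℕ, 0 < n →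
      (Vn n / 8 ≤ ∫ x, |dirichlet n x| ∂μ) ∧
      (∫ x, |dirichlet n x| ∂μ) ≤ Vn n ∧
      ∀ f : G → ℝ, Integrable f μ →
        ∫ x, |psum μ n f x| ∂μ ≤ c * Vn n * ∫ x, |f x| ∂μ := by
  refine ⟨1, one_pos, fun n _ => ?_⟩
  have hn : n < 2 ^ n := Nat.lt_two_pow_self
  have hnorm : ∫ x, |dirichlet n x| ∂μ = dirichletL1Sum n n := by
    simpa using integral_abs_dirichlet_add_eq_dirichletL1Sum hμ hn.le 0
  have hupper : ∫ x, |dirichlet n x| ∂μ ≤ Vn n := hnorm ▸ dirichletL1Sum_le_Vn hn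
  refine ⟨hnorm ▸ Vn_div_eight_le_dirichletL1Sum hn, hupper, fun f hf => ?_⟩
  rw [one_mul]
  exact (integral_abs_psum_le hμ n hf).trans
    (mul_le_mul_of_nonneg_right hupper (integral_nonneg fun x => abs_nonneg _))

end
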